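/- Lemma 5 (one-iteration result for SSI-HG, stated deterministically with conditional expectations written as averages over the coordinate choice). Let σ, τ > 0, θ ∈ (0, 1], and κ = max{L12·(στn)^{1/2}, L11·σ}. Let w^{k−1}, w^k, w^{k+1} ∈ E and δ^{k−1}, δ^k ∈ F satisfy: q^k = ∇_w φ(w^{k−1}, δ^{k−1}) − (n−1)(∇_w φ(w^k, δ^k) − ∇_w φ(w^k, δ^{k−1})), and there is γ_f^{k+1} ∈ ∂f(w^{k+1}) with 0 = γ_f^{k+1} + σ^{−1}(w^{k+1} − w^k) + ∇_w φ(w^k, δ^k) + θ(∇_w φ(w^k, δ^k) − q^k). Let δ̂^{k+1} ∈ F be such that there is γ̂_g^{k+1} ∈ ∂g(δ̂^{k+1}) with 0 = γ̂_g^{k+1} + τ^{−1}(δ̂^{k+1} − δ^k) − ∇_δ φ(w^{k+1}, δ̂^{k+1}). For i ∈ {1,…,n}, let δ^{(i)} ∈ F agree with δ^k except that its i-th coordinate equals δ̂^{k+1}_i, and set q^{(i)} = ∇_w φ(w^k, δ^k) − (n−1)(∇_w φ(w^{k+1}, δ^{(i)}) − ∇_w φ(w^{k+1}, δ^k)). Then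 for every (w, δ) ∈ E × F: 0 ≥ ⟨γ_f^{k+1} + ∇_w φ(w^{k+1}, δ̂^{k+1}), w^{k+1} − w⟩ + ⟨γ̂_g^{k+1} − ∇_δ φ(w^{k+1}, δ̂^{k+1}), δ̂^{k+1} − δ⟩ + (1/n)∑_{i=1}^n ⟨w − w^{k+1}, ∇_w φ(w^{k+1}, δ^{(i)}) − q^{(i)}⟩ − θ⟨w − w^k, ∇_w φ(w^k, δ^k) − q^k⟩ + (1/(2σ))‖w − w^{k+1}‖² + ((1 − 2κ)/(2σ))‖w^{k+1} − w^k‖² − (1/(2σ))‖w − w^k‖² − (κθ/(2σ))‖w^k − w^{k−1}‖² + (1/(2τ))∑_{i=1}^n ‖δ − δ^{(i)}‖² + (1/(2τ))∑_{i=1}^n ‖δ^{(i)} − δ^k‖² − (n/(2τ))‖δ − δ^k‖² − (nκθ/(2τ))‖δ^k − δ^{k−1}‖². -/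

import Mathlib

open scoped RealInnerProductSpace

/-- `γ` is a subgradient of `h` at `x`. -/
def IsSubgradient {X : Type*} [NormedAddCommGroup X] [InnerProductSpace ℝ X]
    (h : X → ℝ) (x γ : X) : Prop :=
  ∀ u, h u ≥ h x + ⟪γ, u - x⟫

/-- The point of `PiLp 2 Fd` that agrees with `δ` in all coordinates except that its
`i`-th coordinate equals `x`. -/
def updCoord {n : ℕ} {Fd : Fin n → Type*} [∀ i, NormedAddCommGroup (Fd i)]
    (δ : PiLp 2 Fd) (i : Fin n) (x : Fd i) : PiLp 2 Fd :=
  WithLp.toLp 2 (Function.update δ i x)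

/-! Substituting the optimality conditions of the two proximal steps, the three-point identity
`‖u - w‖² = ‖u - v‖² + 2⟪u - v, v - w⟫ + ‖v - w‖²` cancels everything except the extrapolation
error `-θ⟪∇_w φ(wᵏ, δᵏ) - qᵏ, wᵏ⁺¹ - wᵏ⟫` and the `κ` terms. The averages over the coordinate
choice collapse because `φ` is separable: `∑ᵢ ∇_w φ(w, δ⁽ⁱ⁾) = ∇_w φ(w, δ̂) + (n - 1) ∇_w φ(w, δᵏ)`,
and likewise for the squared distances. Finally `‖∇_w φ(wᵏ, δᵏ) - qᵏ‖ ≤ n L₁₂ ‖δᵏ - δᵏ⁻¹‖ +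
L₁₁ ‖wᵏ - wᵏ⁻¹‖`, and Young's inequality with `κ ≥ L₁₂ √(στn)`, `κ ≥ L₁₁ σ` absorbs the error. -/

theorem Fintype.sum_apply_update {ι : Type*} [Fintype ι] [DecidableEq ι] {α : ι → Type*}
    {M : Type*} [AddCommGroup M] (F : ∀ j, α j → M) (δ : ∀ j, α j) (i : ι) (x : α i) :
    ∑ j, F j (Function.update δ i x j) = ∑ j, F j (δ j) + F i x - F i (δ i) := by
  simp_rw [Function.apply_update F δ i x, Finset.sum_update_of_mem (Finset.mem_univ i),
    ← Finset.add_sum_erase _ _ (Finset.mem_univ i), Finset.sdiff_singleton_eq_erase]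
  abel

theorem Fintype.sum_sum_apply_update {ι : Type*} [Fintype ι] [DecidableEq ι] {α : ι → Type*}
    {R M : Type*} [CommRing R] [AddCommGroup M] [Module R M] (F : ∀ j, α j → M) (δ δ' : ∀ j, α j) :
    ∑ i, ∑ j, F j (Function.update δ i (δ' i) j)
      = ((Fintype.card ι : R) - 1) • ∑ j, F j (δ j) + ∑ j, F j (δ' j) := by
  simp_rw [Fintype.sum_apply_update, Finset.sum_sub_distrib, Finset.sum_add_distrib,
    Finset.sum_const, Finset.card_univ, ← Nat.cast_smul_eq_nsmul R]
  module

section updCoord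

variable {n : ℕ} {Fd : Fin n → Type*} [∀ i, NormedAddCommGroup (Fd i)]

theorem updCoord_apply (δ : PiLp 2 Fd) (i : Fin n) (x : Fd i) (j : Fin n) :
    updCoord δ i x j = Function.update δ i x j := rfl

theorem sum_updCoord_of_eq_sum {M : Type*} [AddCommGroup M] [Module ℝ M]
    (G : PiLp 2 Fd → M) (g : ∀ i, Fd i → M) (hG : ∀ δ, G δ = ∑ i, g i (δ i))
    (δ δ' : PiLp 2 Fd) :
    ∑ i, G (updCoord δ i (δ' i)) = ((n : ℝ) - 1) • G δ + G δ' := by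
  simp_rw [hG, updCoord_apply]
  simpa using Fintype.sum_sum_apply_update (R := ℝ) g δ δ'

theorem sum_norm_sub_updCoord_sq (η δ δ' : PiLp 2 Fd) :
    ∑ i, ‖η - updCoord δ i (δ' i)‖ ^ 2 = ((n : ℝ) - 1) * ‖η - δ‖ ^ 2 + ‖η - δ'‖ ^ 2 :=
  sum_updCoord_of_eq_sum (fun δ => ‖η - δ‖ ^ 2) (fun i y => ‖η i - y‖ ^ 2)
    (fun δ => by simp [PiLp.norm_sq_eq_of_L2]) δ δ'

theorem sum_norm_updCoord_sub_sq (δ δ' : PiLp 2 Fd) :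
    ∑ i, ‖updCoord δ i (δ' i) - δ‖ ^ 2 = ‖δ' - δ‖ ^ 2 := by
  have := sum_updCoord_of_eq_sum (fun η => ‖η - δ‖ ^ 2) (fun i y => ‖y - δ i‖ ^ 2)
    (fun η => by simp [PiLp.norm_sq_eq_of_L2]) δ δ'
  simpa using this

theorem sum_sub_extrapolated_eq {M : Type*} [AddCommGroup M] [Module ℝ M]
    (G : PiLp 2 Fd → M) (g : ∀ i, Fd i → M) (hG : ∀ δ, G δ = ∑ i, g i (δ i))
    {δ δ' : PiLp 2 Fd} {c : M} {q : Fin n → M}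
    (hq : ∀ i, q i = c - ((n : ℝ) - 1) • (G (updCoord δ i (δ' i)) - G δ)) :
    ∑ i, (G (updCoord δ i (δ' i)) - q i) = (n : ℝ) • (G δ' - c) := by
  have hterm : ∀ i, G (updCoord δ i (δ' i)) - q i
      = (n : ℝ) • G (updCoord δ i (δ' i)) - (((n : ℝ) - 1) • G δ + c) := by
    intro i; rw [hq]; module
  simp_rw [hterm, Finset.sum_sub_distrib, ← Finset.smul_sum, sum_updCoord_of_eq_sum G g hG,
    Finset.sum_const, Finset.card_univ, Fintype.card_fin, ← Nat.cast_smul_eq_nsmul ℝ]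
  module

end updCoord

section ThreePoint

variable {E : Type*} [NormedAddCommGroup E] [InnerProductSpace ℝ E]

theorem norm_sub_sq_eq_three_point (u v w : E) :
    ‖u - w‖ ^ 2 = ‖u - v‖ ^ 2 + 2 * ⟪u - v, v - w⟫ + ‖v - w‖ ^ 2 := by
  rw [← norm_add_sq_real, sub_add_sub_cancel]

theorem primal_step_identity {σ θ : ℝ} {w₀ w₁ g₀ Δ γ : E}
    (hstep : (0 : E) = γ + σ⁻¹ • (w₁ - w₀) + g₀ + θ • Δ) (w g₁ : E) :
    ⟪γ + g₁, w₁ - w⟫ + ⟪w - w₁, g₁ - g₀⟫ - θ * ⟪w - w₀, Δ⟫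
        + 1 / (2 * σ) * ‖w - w₁‖ ^ 2 + 1 / (2 * σ) * ‖w₁ - w₀‖ ^ 2
        - 1 / (2 * σ) * ‖w - w₀‖ ^ 2
      = -(θ * ⟪Δ, w₁ - w₀⟫) := by
  have hγ : (g₁ - g₀) - (γ + g₁) - σ⁻¹ • (w₁ - w₀) = θ • Δ := by
    linear_combination (norm := module) hstep
  calc _ = ⟪w - w₁, (g₁ - g₀) - (γ + g₁) - σ⁻¹ • (w₁ - w₀)⟫ - θ * ⟪w - w₀, Δ⟫ := by
        rw [norm_sub_sq_eq_three_point w w₁ w₀, real_inner_comm (w₁ - w), ← neg_sub w w₁,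
          inner_neg_left]
        simp only [inner_sub_right, real_inner_smul_right]
        ring
    _ = -(θ * ⟪Δ, w₁ - w₀⟫) := by
        rw [hγ, real_inner_smul_right, ← mul_sub, ← inner_sub_left, sub_sub_sub_cancel_left,
          ← neg_sub w₁ w₀, inner_neg_left, real_inner_comm, mul_neg]

theorem dual_step_identity {τ : ℝ} {δ₀ δ₁ γ g : E}
    (hstep : (0 : E) = γ + τ⁻¹ • (δ₁ - δ₀) - g) (δ : E) :
    ⟪γ - g, δ₁ - δ⟫ + 1 / (2 * τ) * ‖δ - δ₁‖ ^ 2 + 1 / (2 * τ) * ‖δ₁ - δ₀‖ ^ 2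
        - 1 / (2 * τ) * ‖δ - δ₀‖ ^ 2 = 0 := by
  have hγ : γ - g = -(τ⁻¹ • (δ₁ - δ₀)) := by
    linear_combination (norm := module) -hstep
  rw [norm_sub_sq_eq_three_point δ δ₁ δ₀, hγ, ← neg_sub δ δ₁, inner_neg_right, inner_neg_left,
    real_inner_smul_left, real_inner_comm]
  ring

end ThreePoint

theorem norm_extrapolation_error_le {E F : Type*} [SeminormedAddCommGroup E] [NormedSpace ℝ E]
    [SeminormedAddCommGroup F] (G : E → F → E) {L₁₁ L₁₂ : ℝ}
    (hLw : ∀ w w' δ, ‖G w δ - G w' δ‖ ≤ L₁₁ * ‖w - w'‖)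
    (hLwd : ∀ w δ δ', ‖G w δ - G w δ'‖ ≤ L₁₂ * ‖δ - δ'‖) (n : ℕ) (w w' : E) (δ δ' : F) :
    ‖G w δ - (G w' δ' - ((n : ℝ) - 1) • (G w δ - G w δ'))‖
      ≤ n * L₁₂ * ‖δ - δ'‖ + L₁₁ * ‖w - w'‖ := by
  have hsplit : G w δ - (G w' δ' - ((n : ℝ) - 1) • (G w δ - G w δ'))
      = (n : ℝ) • (G w δ - G w δ') + (G w δ' - G w' δ') := by module
  rw [hsplit, mul_assoc]
  refine (norm_add_le _ _).trans (add_le_add ?_ (hLw w w' δ'))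
  rw [norm_smul, Real.norm_natCast]
  exact mul_le_mul_of_nonneg_left (hLwd w δ δ') n.cast_nonneg

theorem two_mul_mul_le_of_sq_eq {p q s a b : ℝ} (hq : 0 < q) (hs : s ^ 2 = p * q) :
    2 * s * a * b ≤ p * a ^ 2 + q * b ^ 2 := by
  have : 0 ≤ q * (p * a ^ 2 + q * b ^ 2 - 2 * s * a * b) := by
    nlinarith [sq_nonneg (s * a - q * b)]
  nlinarith

theorem extrapolation_error_le {n L₁₁ L₁₂ σ τ θ κ a d x : ℝ} (hn : 0 ≤ n) (hσ : 0 < σ)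
    (hτ : 0 < τ) (hθ₀ : 0 ≤ θ) (hθ₁ : θ ≤ 1) (hL₁₂ : 0 ≤ L₁₂)
    (hκ₁ : L₁₂ * √(σ * τ * n) ≤ κ) (hκ₂ : L₁₁ * σ ≤ κ) (ha : 0 ≤ a) (hd : 0 ≤ d) (hx : 0 ≤ x) :
    θ * ((n * L₁₂ * d + L₁₁ * a) * x)
      ≤ κ / σ * x ^ 2 + κ * θ / (2 * σ) * a ^ 2 + n * κ * θ / (2 * τ) * d ^ 2 := by
  set s := √(σ * τ * n)
  have hs : s ^ 2 = σ * n * τ := by rw [Real.sq_sqrt (by positivity)]; ring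
  have hκ : 0 ≤ κ := (mul_nonneg hL₁₂ (Real.sqrt_nonneg _)).trans hκ₁
  have hw : L₁₁ * a * x ≤ κ / (2 * σ) * (a ^ 2 + x ^ 2) := by
    have h1 : L₁₁ ≤ κ / σ := (le_div_iff₀ hσ).2 hκ₂
    calc L₁₁ * a * x ≤ κ / σ * (a * x) := by rw [mul_assoc]; gcongr
      _ ≤ κ / σ * ((a ^ 2 + x ^ 2) / 2) := by gcongr; nlinarith [sq_nonneg (a - x)]
      _ = _ := by ring
  have hδ : n * L₁₂ * d * x ≤ κ / (2 * τ * σ) * (σ * n * d ^ 2 + τ * x ^ 2) := by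
    calc n * L₁₂ * d * x = L₁₂ * s * (2 * s * d * x) / (2 * τ * σ) := by
          rw [eq_div_iff (by positivity)]; linear_combination (-2 * L₁₂ * d * x) * hs
      _ ≤ κ * (σ * n * d ^ 2 + τ * x ^ 2) / (2 * τ * σ) := by
          have hs₀ : 0 ≤ s := Real.sqrt_nonneg _
          gcongr ?_ / _
          exact mul_le_mul hκ₁ (two_mul_mul_le_of_sq_eq hτ hs) (by positivity) hκ
      _ = _ := by ring
  calc θ * ((n * L₁₂ * d + L₁₁ * a) * x) = θ * (n * L₁₂ * d * x + L₁₁ * a * x) := by ring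
    _ ≤ θ * (κ / (2 * τ * σ) * (σ * n * d ^ 2 + τ * x ^ 2) + κ / (2 * σ) * (a ^ 2 + x ^ 2)) := by
        gcongr
    _ = θ * (κ / σ * x ^ 2) + κ * θ / (2 * σ) * a ^ 2 + n * κ * θ / (2 * τ) * d ^ 2 := by
        field_simp; ring
    _ ≤ _ := by
        have := mul_le_of_le_one_left (show 0 ≤ κ / σ * x ^ 2 by positivity) hθ₁
        linarith

theorem ssihg_one_iteration_result_general
    {n : ℕ} (hn : 1 ≤ n)
    {E : Type*} [NormedAddCommGroup E] [InnerProductSpace ℝ E]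
    {Fd : Fin n → Type*} [∀ i, NormedAddCommGroup (Fd i)]
    [∀ i, InnerProductSpace ℝ (Fd i)]
    (gw : ∀ i, E → Fd i → E)
    (Gw : E → PiLp 2 Fd → E)
    (hGw : ∀ w δ, Gw w δ = ∑ i, gw i w (δ i))
    (Gd : E → PiLp 2 Fd → PiLp 2 Fd)
    (L11 L12 : ℝ) (hL12 : 0 < L12)
    (hLw : ∀ (w w' : E) (δ : PiLp 2 Fd), ‖Gw w δ - Gw w' δ‖ ≤ L11 * ‖w - w'‖)
    (hLwd : ∀ (w : E) (δ δ' : PiLp 2 Fd), ‖Gw w δ - Gw w δ'‖ ≤ L12 * ‖δ - δ'‖)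
    (σ τ θ : ℝ) (hσ : 0 < σ) (hτ : 0 < τ) (hθ0 : 0 < θ) (hθ1 : θ ≤ 1)
    (κ : ℝ) (hκ : κ = max (L12 * Real.sqrt (σ * τ * (n : ℝ))) (L11 * σ))
    (wkm1 wk wk1 : E) (δkm1 δk : PiLp 2 Fd)
    (qk : E)
    (hq : qk = Gw wkm1 δkm1 - ((n : ℝ) - 1) • (Gw wk δk - Gw wk δkm1))
    (γf : E)
    (hupw : (0 : E) = γf + σ⁻¹ • (wk1 - wk) + Gw wk δk + θ • (Gw wk δk - qk))
    (δhat : PiLp 2 Fd)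
    (γghat : PiLp 2 Fd)
    (hupd : (0 : PiLp 2 Fd) = γghat + τ⁻¹ • (δhat - δk) - Gd wk1 δhat)
    (q : Fin n → E)
    (hqi : ∀ i, q i = Gw wk δk
      - ((n : ℝ) - 1) • (Gw wk1 (updCoord δk i (δhat i)) - Gw wk1 δk)) :
    ∀ (w : E) (δ : PiLp 2 Fd),
      0 ≥ ⟪γf + Gw wk1 δhat, wk1 - w⟫ + ⟪γghat - Gd wk1 δhat, δhat - δ⟫
        + (1 / (n : ℝ)) * ∑ i, ⟪w - wk1, Gw wk1 (updCoord δk i (δhat i)) - q i⟫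
        - θ * ⟪w - wk, Gw wk δk - qk⟫
        + (1 / (2 * σ)) * ‖w - wk1‖ ^ 2
        + ((1 - 2 * κ) / (2 * σ)) * ‖wk1 - wk‖ ^ 2
        - (1 / (2 * σ)) * ‖w - wk‖ ^ 2
        - (κ * θ / (2 * σ)) * ‖wk - wkm1‖ ^ 2
        + (1 / (2 * τ)) * ∑ i, ‖δ - updCoord δk i (δhat i)‖ ^ 2
        + (1 / (2 * τ)) * ∑ i, ‖updCoord δk i (δhat i) - δk‖ ^ 2
        - ((n : ℝ) / (2 * τ)) * ‖δ - δk‖ ^ 2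
        - ((n : ℝ) * κ * θ / (2 * τ)) * ‖δk - δkm1‖ ^ 2 := by
  intro w δ
  have havg : 1 / (n : ℝ) * ∑ i, ⟪w - wk1, Gw wk1 (updCoord δk i (δhat i)) - q i⟫
      = ⟪w - wk1, Gw wk1 δhat - Gw wk δk⟫ := by
    rw [← inner_sum, sum_sub_extrapolated_eq (Gw wk1) (fun i => gw i wk1) (hGw wk1) hqi,
      real_inner_smul_right, one_div, inv_mul_cancel_left₀ (by exact_mod_cast (by omega : n ≠ 0))]
  have hcross : -(θ * ⟪Gw wk δk - qk, wk1 - wk⟫)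
      ≤ κ / σ * ‖wk1 - wk‖ ^ 2 + κ * θ / (2 * σ) * ‖wk - wkm1‖ ^ 2
        + n * κ * θ / (2 * τ) * ‖δk - δkm1‖ ^ 2 := by
    calc _ ≤ θ * ((n * L12 * ‖δk - δkm1‖ + L11 * ‖wk - wkm1‖) * ‖wk1 - wk‖) := by
          rw [← mul_neg]
          gcongr
          refine (neg_le_abs _).trans ((abs_real_inner_le_norm _ _).trans ?_)
          gcongr
          rw [hq]
          exact norm_extrapolation_error_le Gw hLw hLwd n wk wkm1 δk δkm1
      _ ≤ _ := extrapolation_error_le n.cast_nonneg hσ hτ hθ0.le hθ1 hL12.le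
          (hκ ▸ le_max_left _ _) (hκ ▸ le_max_right _ _) (norm_nonneg _) (norm_nonneg _)
          (norm_nonneg _)
  rw [havg, sum_norm_sub_updCoord_sq, sum_norm_updCoord_sub_sq]
  linear_combination primal_step_identity hupw w (Gw wk1 δhat) + dual_step_identity hupd δ
    + hcross

/-- Lemma 5: one-iteration result for SSI-HG, stated deterministically with conditional
expectations written as averages over the coordinate choice. -/
theorem ssihg_one_iteration_result
    {n : ℕ} (hn : 1 ≤ n)
    {E : Type*} [NormedAddCommGroup E] [InnerProductSpace ℝ E] [FiniteDimensional ℝ E]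
    {Fd : Fin n → Type*} [∀ i, NormedAddCommGroup (Fd i)]
    [∀ i, InnerProductSpace ℝ (Fd i)] [∀ i, FiniteDimensional ℝ (Fd i)]
    (φ : ∀ i, E → Fd i → ℝ)
    (gw : ∀ i, E → Fd i → E) (gd : ∀ i, E → Fd i → Fd i)
    (hgw : ∀ (i : Fin n) (w : E) (d : Fd i),
      HasGradientAt (fun w' => φ i w' d) (gw i w d) w)
    (hgd : ∀ (i : Fin n) (w : E) (d : Fd i),
      HasGradientAt (fun d' => φ i w d') (gd i w d) d)
    (Gw : E → PiLp 2 Fd → E)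
    (hGw : ∀ w δ, Gw w δ = ∑ i, gw i w (δ i))
    (Gd : E → PiLp 2 Fd → PiLp 2 Fd)
    (hGd : ∀ w δ i, Gd w δ i = gd i w (δ i))
    (L11 L12 : ℝ) (hL11 : 0 < L11) (hL12 : 0 < L12)
    (hLw : ∀ (w w' : E) (δ : PiLp 2 Fd), ‖Gw w δ - Gw w' δ‖ ≤ L11 * ‖w - w'‖)
    (hLwd : ∀ (w : E) (δ δ' : PiLp 2 Fd), ‖Gw w δ - Gw w δ'‖ ≤ L12 * ‖δ - δ'‖)
    (f : E → ℝ) (hf : ConvexOn ℝ Set.univ f)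
    (gi : ∀ i, Fd i → ℝ) (hgi : ∀ i, ConvexOn ℝ Set.univ (gi i))
    (σ τ θ : ℝ) (hσ : 0 < σ) (hτ : 0 < τ) (hθ0 : 0 < θ) (hθ1 : θ ≤ 1)
    (κ : ℝ) (hκ : κ = max (L12 * Real.sqrt (σ * τ * (n : ℝ))) (L11 * σ))
    (wkm1 wk wk1 : E) (δkm1 δk : PiLp 2 Fd)
    (qk : E)
    (hq : qk = Gw wkm1 δkm1 - ((n : ℝ) - 1) • (Gw wk δk - Gw wk δkm1))
    (γf : E) (hsubf : IsSubgradient f wk1 γf)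
    (hupw : (0 : E) = γf + σ⁻¹ • (wk1 - wk) + Gw wk δk + θ • (Gw wk δk - qk))
    (δhat : PiLp 2 Fd)
    (γghat : PiLp 2 Fd) (hsubg : ∀ i, IsSubgradient (gi i) (δhat i) (γghat i))
    (hupd : (0 : PiLp 2 Fd) = γghat + τ⁻¹ • (δhat - δk) - Gd wk1 δhat)
    (q : Fin n → E)
    (hqi : ∀ i, q i = Gw wk δk
      - ((n : ℝ) - 1) • (Gw wk1 (updCoord δk i (δhat i)) - Gw wk1 δk)) :
    ∀ (w : E) (δ : PiLp 2 Fd),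
      0 ≥ ⟪γf + Gw wk1 δhat, wk1 - w⟫ + ⟪γghat - Gd wk1 δhat, δhat - δ⟫
        + (1 / (n : ℝ)) * ∑ i, ⟪w - wk1, Gw wk1 (updCoord δk i (δhat i)) - q i⟫
        - θ * ⟪w - wk, Gw wk δk - qk⟫
        + (1 / (2 * σ)) * ‖w - wk1‖ ^ 2
        + ((1 - 2 * κ) / (2 * σ)) * ‖wk1 - wk‖ ^ 2
        - (1 / (2 * σ)) * ‖w - wk‖ ^ 2
        - (κ * θ / (2 * σ)) * ‖wk - wkm1‖ ^ 2
        + (1 / (2 * τ)) * ∑ i, ‖δ - updCoord δk i (δhat i)‖ ^ 2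
        + (1 / (2 * τ)) * ∑ i, ‖updCoord δk i (δhat i) - δk‖ ^ 2
        - ((n : ℝ) / (2 * τ)) * ‖δ - δk‖ ^ 2
        - ((n : ℝ) * κ * θ / (2 * τ)) * ‖δk - δkm1‖ ^ 2 :=
  ssihg_one_iteration_result_general hn gw Gw hGw Gd L11 L12 hL12 hLw hLwd σ τ θ hσ hτ hθ0 hθ1 κ hκ
    wkm1 wk wk1 δkm1 δk qk hq γf hupw δhat γghat hupd q hqi
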